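/- arXiv:1510.01077 — 6 statements merged into one kernel-verified Lean document; each statement's English description precedes it below -/
import Mathlib

section
/- Suppose u₁ ∈ H satisfies ‖u₁‖ = 1 and J(u₁) ≤ J(v) for every v ∈ H with ‖v‖ = 1 (u₁ is a ground state, i.e. a minimizer of the Rayleigh quotient J(u)/‖u‖ over nonzero u). Then J(u₁) • u₁ ∈ ∂J(u₁), i.e. u₁ solves the nonlinear eigenvalue problem λ u ∈ ∂J(u) with eigenvalue λ = J(u₁). -/
/-- `p` is a subgradient of `J` at `u`: `J v ≥ J u + ⟨p, v - u⟩` for all `v`. -/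
def IsSubgradientAt {H : Type*} [NormedAddCommGroup H] [InnerProductSpace ℝ H]
    (J : H → ℝ) (u p : H) : Prop :=
  ∀ v : H, J v ≥ J u + (inner ℝ p (v - u) : ℝ)

/-!
Homogeneity turns the minimality of `u₁` on the unit sphere into `‖v‖ J(u₁) ≤ J(v)` for all `v`,
and convexity together with evenness makes `J ≥ 0`. Cauchy–Schwarz then gives
`J(u₁) ⟨u₁, v⟩ ≤ J(u₁) ‖v‖ ≤ J(v)`, which is the subgradient inequality for `J(u₁) u₁` at `u₁`
because `⟨J(u₁) u₁, v - u₁⟩ = J(u₁) ⟨u₁, v⟩ - J(u₁)`.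
-/

section AbsHomogeneous

variable {E : Type*} {J : E → ℝ}

lemma apply_zero_of_abs_homogeneous [AddCommGroup E] [Module ℝ E]
    (hhom : ∀ (c : ℝ) (w : E), J (c • w) = |c| * J w) : J 0 = 0 := by
  simpa using hhom 0 0

lemma nonneg_of_convexOn_of_abs_homogeneous [AddCommGroup E] [Module ℝ E]
    (hconv : ConvexOn ℝ Set.univ J) (hhom : ∀ (c : ℝ) (w : E), J (c • w) = |c| * J w)
    (u : E) : 0 ≤ J u := by
  have hneg : J (-u) = J u := by simpa using hhom (-1) u
  have hmid : J 0 ≤ (1 / 2 : ℝ) * J u + (1 / 2 : ℝ) * J (-u) := by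
    simpa using hconv.2 (Set.mem_univ u) (Set.mem_univ (-u))
      (by norm_num : (0 : ℝ) ≤ 1 / 2) (by norm_num : (0 : ℝ) ≤ 1 / 2) (by norm_num)
  rw [apply_zero_of_abs_homogeneous hhom, hneg] at hmid
  linarith

lemma norm_mul_le_of_forall_norm_eq_one_le [NormedAddCommGroup E] [NormedSpace ℝ E]
    (hhom : ∀ (c : ℝ) (w : E), J (c • w) = |c| * J w) {u₁ : E}
    (hmin : ∀ v : E, ‖v‖ = 1 → J u₁ ≤ J v) (v : E) : ‖v‖ * J u₁ ≤ J v := by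
  rcases eq_or_ne v 0 with rfl | hv
  · simp [apply_zero_of_abs_homogeneous hhom]
  have hvn : ‖v‖ ≠ 0 := norm_ne_zero_iff.mpr hv
  have hunit : J u₁ ≤ ‖v‖⁻¹ * J v := by
    rw [← abs_of_nonneg (inv_nonneg.mpr (norm_nonneg v)), ← hhom]
    exact hmin _ (by rw [norm_smul, norm_inv, norm_norm, inv_mul_cancel₀ hvn])
  calc ‖v‖ * J u₁ ≤ ‖v‖ * (‖v‖⁻¹ * J v) := mul_le_mul_of_nonneg_left hunit (norm_nonneg v)
    _ = J v := mul_inv_cancel_left₀ hvn _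

end AbsHomogeneous

theorem groundState_isEigenfunction_general
    {H : Type*} [NormedAddCommGroup H] [InnerProductSpace ℝ H]
    (J : H → ℝ) (hconv : ConvexOn ℝ Set.univ J)
    (hhom : ∀ (c : ℝ) (w : H), J (c • w) = |c| * J w)
    (u₁ : H) (hnorm : ‖u₁‖ = 1) (hmin : ∀ v : H, ‖v‖ = 1 → J u₁ ≤ J v) :
    IsSubgradientAt J u₁ ((J u₁) • u₁) := by
  intro v
  have hinner : inner ℝ (J u₁ • u₁) (v - u₁) = J u₁ * inner ℝ u₁ v - J u₁ := by
    rw [real_inner_smul_left, inner_sub_right, real_inner_self_eq_norm_sq, hnorm]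
    ring
  have hcs : inner ℝ u₁ v ≤ ‖v‖ := by
    simpa [hnorm] using real_inner_le_norm u₁ v
  have key : J u₁ * inner ℝ u₁ v ≤ J v :=
    calc J u₁ * inner ℝ u₁ v ≤ J u₁ * ‖v‖ :=
          mul_le_mul_of_nonneg_left hcs (nonneg_of_convexOn_of_abs_homogeneous hconv hhom u₁)
      _ = ‖v‖ * J u₁ := mul_comm _ _
      _ ≤ J v := norm_mul_le_of_forall_norm_eq_one_le hhom hmin v
  rw [hinner]
  linarith

/-- A ground state, i.e. a minimizer of `J` over the unit sphere (equivalently of the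
Rayleigh quotient `J(u)/‖u‖` over nonzero `u`), solves the nonlinear eigenvalue problem
`λ u ∈ ∂J(u)` with eigenvalue `λ = J(u₁)`. -/
theorem groundState_isEigenfunction
    {H : Type*} [NormedAddCommGroup H] [InnerProductSpace ℝ H] [CompleteSpace H]
    (J : H → ℝ) (hconv : ConvexOn ℝ Set.univ J)
    (hhom : ∀ (c : ℝ) (w : H), J (c • w) = |c| * J w)
    (u₁ : H) (hnorm : ‖u₁‖ = 1) (hmin : ∀ v : H, ‖v‖ = 1 → J u₁ ≤ J v) :
    IsSubgradientAt J u₁ ((J u₁) • u₁) :=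
  groundState_isEigenfunction_general J hconv hhom u₁ hnorm hmin
end

section
/- Let f ∈ H and λ > 0 with λ • f ∈ ∂J(f). Define u : [0,∞) → H by u(t) = (1 - tλ) • f for 0 ≤ t ≤ 1/λ and u(t) = 0 for t > 1/λ. Then u(0) = f; for every t ∈ (0, 1/λ), u is differentiable at t with u'(t) = -λ • f and λ • f ∈ ∂J(u(t)); and for every t > 1/λ, u is differentiable at t with u'(t) = 0 and 0 ∈ ∂J(u(t)). Hence u solves the gradient (scale space) flow ∂ₜu(t) ∈ -∂J(u(t)), u(0) = f, for all t ≠ 1/λ. -/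
/-!
For an absolutely one-homogeneous `J`, testing the subgradient inequality at `v = 0` and
`v = 2u` shows that `p ∈ ∂J(u)` exactly when `J ≥ ⟨p, ·⟩` with equality at `u`. This
description is invariant under scaling `u` by `c ≥ 0`, so `λf` remains a subgradient along
the whole segment `(1 - tλ) • f`, whose time derivative is `-λf`. Once the flow has reached
`0` it stays there, and `0 ∈ ∂J(0)` because `J v ≥ max ⟨λf, v⟩ ⟨λf, -v⟩ ≥ 0`.
-/

open scoped RealInnerProductSpace

section Subgradient

variable {H : Type*} [NormedAddCommGroup H] [InnerProductSpace ℝ H] {J : H → ℝ}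

theorem isSubgradientAt_of_inner_le {u p : H} (hu : J u = ⟪p, u⟫) (hle : ∀ v, ⟪p, v⟫ ≤ J v) :
    IsSubgradientAt J u p := by
  intro v
  rw [hu, inner_sub_right]
  linarith [hle v]

variable (hhom : ∀ (c : ℝ) (w : H), J (c • w) = |c| * J w)
include hhom

theorem map_zero_of_abs_homogeneous : J 0 = 0 := by
  simpa using hhom 0 0

namespace IsSubgradientAt

variable {u p : H} (hp : IsSubgradientAt J u p)
include hp

theorem apply_eq_inner : J u = ⟪p, u⟫ := by
  have at_zero := hp 0
  have at_two := hp ((2 : ℝ) • u)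
  rw [map_zero_of_abs_homogeneous hhom, zero_sub, inner_neg_right] at at_zero
  rw [hhom, two_smul, add_sub_cancel_right] at at_two
  norm_num at at_two
  linarith

theorem inner_le (v : H) : ⟪p, v⟫ ≤ J v := by
  have := hp v
  rw [inner_sub_right, apply_eq_inner hhom hp] at this
  linarith

theorem apply_nonneg (v : H) : 0 ≤ J v := by
  have hneg : J (-v) = J v := by simpa using hhom (-1) v
  have := hp.inner_le hhom (-v)
  rw [hneg, inner_neg_right] at this
  linarith [hp.inner_le hhom v]

theorem smul_of_nonneg {c : ℝ} (hc : 0 ≤ c) : IsSubgradientAt J (c • u) p :=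
  isSubgradientAt_of_inner_le
    (by rw [hhom, abs_of_nonneg hc, apply_eq_inner hhom hp, real_inner_smul_right])
    (hp.inner_le hhom)

theorem zero_at_zero : IsSubgradientAt J 0 0 :=
  isSubgradientAt_of_inner_le (by rw [map_zero_of_abs_homogeneous hhom, inner_zero_left])
    (fun v => by simpa using hp.apply_nonneg hhom v)

end IsSubgradientAt

end Subgradient

section Piecewise

variable {E : Type*} [NormedAddCommGroup E] [NormedSpace ℝ E] {g h : ℝ → E} {a t : ℝ}

theorem HasDerivAt.ite_le_of_lt {g' : E} (hg : HasDerivAt g g' t) (ht : t < a) :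
    HasDerivAt (fun s => if s ≤ a then g s else h s) g' t :=
  hg.congr_of_eventuallyEq <| by
    filter_upwards [eventually_lt_nhds ht] with s hs
    rw [if_pos hs.le]

theorem HasDerivAt.ite_le_of_gt {h' : E} (hh : HasDerivAt h h' t) (ht : a < t) :
    HasDerivAt (fun s => if s ≤ a then g s else h s) h' t :=
  hh.congr_of_eventuallyEq <| by
    filter_upwards [eventually_gt_nhds ht] with s hs
    rw [if_neg hs.not_ge]

end Piecewise

theorem gradientFlow_of_eigenfunction_general
    {H : Type*} [NormedAddCommGroup H] [InnerProductSpace ℝ H]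
    (J : H → ℝ)
    (hhom : ∀ (c : ℝ) (w : H), J (c • w) = |c| * J w)
    (f : H) (lam : ℝ) (hlam : 0 < lam) (hef : IsSubgradientAt J f (lam • f))
    (u : ℝ → H)
    (hu : ∀ t : ℝ, u t = if t ≤ 1 / lam then (1 - t * lam) • f else 0) :
    u 0 = f ∧
      (∀ t ∈ Set.Ioo (0 : ℝ) (1 / lam),
        HasDerivAt u (-(lam • f)) t ∧ IsSubgradientAt J (u t) (lam • f)) ∧
      (∀ t : ℝ, 1 / lam < t →
        HasDerivAt u (0 : H) t ∧ IsSubgradientAt J (u t) (0 : H)) := by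
  have segment_deriv (t : ℝ) : HasDerivAt (fun s : ℝ => (1 - s * lam) • f) (-(lam • f)) t := by
    simpa using (((hasDerivAt_id t).mul_const lam).const_sub 1).smul_const f
  refine ⟨by simp [hu, hlam.le], fun t ⟨_, ht⟩ => ⟨?_, ?_⟩, fun t ht => ⟨?_, ?_⟩⟩
  · exact funext hu ▸ (segment_deriv t).ite_le_of_lt ht
  · have hc : 0 ≤ 1 - t * lam := by
      rw [lt_div_iff₀ hlam] at ht
      linarith
    rw [hu, if_pos ht.le]
    exact hef.smul_of_nonneg hhom hc
  · exact funext hu ▸ (hasDerivAt_const t 0).ite_le_of_gt ht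
  · rw [hu, if_neg ht.not_ge]
    exact hef.zero_at_zero hhom

/-- If `f` is an eigenfunction, `λ • f ∈ ∂J(f)` with `λ > 0`, then
`u(t) = (1 - tλ) • f` for `t ≤ 1/λ` and `u(t) = 0` afterwards solves the gradient
(scale space) flow `∂ₜ u(t) ∈ -∂J(u(t))`, `u(0) = f`, away from `t = 1/λ`. -/
theorem gradientFlow_of_eigenfunction
    {H : Type*} [NormedAddCommGroup H] [InnerProductSpace ℝ H] [CompleteSpace H]
    (J : H → ℝ) (hconv : ConvexOn ℝ Set.univ J)
    (hhom : ∀ (c : ℝ) (w : H), J (c • w) = |c| * J w)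
    (f : H) (lam : ℝ) (hlam : 0 < lam) (hef : IsSubgradientAt J f (lam • f))
    (u : ℝ → H)
    (hu : ∀ t : ℝ, u t = if t ≤ 1 / lam then (1 - t * lam) • f else 0) :
    u 0 = f ∧
      (∀ t ∈ Set.Ioo (0 : ℝ) (1 / lam),
        HasDerivAt u (-(lam • f)) t ∧ IsSubgradientAt J (u t) (lam • f)) ∧
      (∀ t : ℝ, 1 / lam < t →
        HasDerivAt u (0 : H) t ∧ IsSubgradientAt J (u t) (0 : H)) :=
  gradientFlow_of_eigenfunction_general J hhom f lam hlam hef u hu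
end

section
/- Let f ∈ H and λ > 0 with λ • f ∈ ∂J(f), and let t > 0. Then u* = max(1 - tλ, 0) • f is the unique minimizer over u ∈ H of the variational functional E(u) = (1/2)‖u - f‖² + t · J(u). -/
section

variable {H : Type*} [NormedAddCommGroup H] {u : H}

theorem forall_le_and_eq_of_quadratic_growth {E : H → ℝ}
    (hgrowth : ∀ w, E u + 1 / 2 * ‖w - u‖ ^ 2 ≤ E w) :
    (∀ w, E u ≤ E w) ∧ (∀ w, E w = E u → w = u) := by
  refine ⟨fun w => by nlinarith [hgrowth w, sq_nonneg ‖w - u‖], fun w hw => ?_⟩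
  have hsq : ‖w - u‖ ^ 2 ≤ 0 := by linarith [hgrowth w]
  have hnorm : ‖w - u‖ = 0 := (pow_eq_zero_iff two_ne_zero).1 (le_antisymm hsq (sq_nonneg _))
  exact sub_eq_zero.1 (norm_eq_zero.1 hnorm)

variable [InnerProductSpace ℝ H] {J : H → ℝ} {p : H}

theorem ConvexOn.apply_zero_le_of_even (hconv : ConvexOn ℝ Set.univ J)
    (heven : ∀ v, J (-v) = J v) (v : H) : J 0 ≤ J v := by
  have h := hconv.2 (Set.mem_univ v) (Set.mem_univ (-v)) (by norm_num : (0 : ℝ) ≤ 1 / 2)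
    (by norm_num : (0 : ℝ) ≤ 1 / 2) (by norm_num)
  rwa [smul_neg, add_neg_cancel, heven, ← add_smul, add_halves, one_smul] at h

theorem isSubgradientAt_iff_of_posHomogeneous
    (hhom : ∀ c : ℝ, 0 ≤ c → ∀ w, J (c • w) = c * J w) :
    IsSubgradientAt J u p ↔ inner ℝ p u = J u ∧ ∀ v, inner ℝ p v ≤ J v := by
  have hJ0 : J 0 = 0 := by simpa using hhom 0 le_rfl 0
  constructor
  · intro hp
    have h0 := hp 0
    have h2 := hp ((2 : ℝ) • u)
    rw [hhom 2 zero_le_two, two_smul, add_sub_cancel_right] at h2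
    rw [zero_sub, inner_neg_right, hJ0] at h0
    have hpu : inner ℝ p u = J u := by linarith
    refine ⟨hpu, fun v => ?_⟩
    have hv := hp v
    rw [inner_sub_right] at hv
    linarith
  · rintro ⟨hpu, hle⟩ v
    rw [inner_sub_right, hpu]
    linarith [hle v]

namespace IsSubgradientAt

theorem smul_of_posHomogeneous (hhom : ∀ c : ℝ, 0 ≤ c → ∀ w, J (c • w) = c * J w)
    (hp : IsSubgradientAt J u p) {s : ℝ} (hs : 0 ≤ s) : IsSubgradientAt J (s • u) p := by
  obtain ⟨hpu, hle⟩ := (isSubgradientAt_iff_of_posHomogeneous hhom).1 hp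
  refine (isSubgradientAt_iff_of_posHomogeneous hhom).2 ⟨?_, hle⟩
  rw [real_inner_smul_right, hpu, hhom s hs]

theorem const_mul (hp : IsSubgradientAt J u p) {t : ℝ} (ht : 0 ≤ t) :
    IsSubgradientAt (fun v => t * J v) u (t • p) := by
  intro v
  rw [real_inner_smul_left]
  nlinarith [mul_le_mul_of_nonneg_left (hp v) ht]

theorem smul_of_forall_le (hmin : ∀ v, J u ≤ J v) (hp : IsSubgradientAt J u p) {s : ℝ}
    (hs₀ : 0 ≤ s) (hs₁ : s ≤ 1) : IsSubgradientAt J u (s • p) := by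
  intro v
  have hv : inner ℝ p (v - u) ≤ J v - J u := by linarith [hp v]
  have hgap : 0 ≤ J v - J u := sub_nonneg.2 (hmin v)
  rw [real_inner_smul_left]
  nlinarith [mul_le_mul_of_nonneg_left hv hs₀]

theorem half_norm_sub_sq_add_le {G : H → ℝ} {f : H} (hp : IsSubgradientAt G u (f - u)) (w : H) :
    1 / 2 * ‖u - f‖ ^ 2 + G u + 1 / 2 * ‖w - u‖ ^ 2 ≤ 1 / 2 * ‖w - f‖ ^ 2 + G w := by
  have hsplit : ‖w - f‖ ^ 2 = ‖w - u‖ ^ 2 + 2 * inner ℝ (w - u) (u - f) + ‖u - f‖ ^ 2 := by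
    rw [← norm_add_sq_real, sub_add_sub_cancel]
  have hv := hp w
  rw [← neg_sub u f, inner_neg_left, real_inner_comm] at hv
  linarith

end IsSubgradientAt

end

theorem variational_minimizer_of_eigenfunction_general
    {H : Type*} [NormedAddCommGroup H] [InnerProductSpace ℝ H]
    (J : H → ℝ) (hconv : ConvexOn ℝ Set.univ J)
    (hhom : ∀ (c : ℝ) (w : H), J (c • w) = |c| * J w)
    (f : H) (lam : ℝ) (hef : IsSubgradientAt J f (lam • f))
    (t : ℝ) (ht : 0 < t)
    (E : H → ℝ) (hE : ∀ w : H, E w = (1 / 2) * ‖w - f‖ ^ 2 + t * J w) :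
    (∀ w : H, E (max (1 - t * lam) 0 • f) ≤ E w) ∧
      (∀ w : H, E w = E (max (1 - t * lam) 0 • f) → w = max (1 - t * lam) 0 • f) := by
  set c := max (1 - t * lam) 0
  have hpos : ∀ s : ℝ, 0 ≤ s → ∀ w, J (s • w) = s * J w := fun s hs w => by
    rw [hhom, abs_of_nonneg hs]
  have hsub : IsSubgradientAt (fun v => t * J v) (c • f) (f - c • f) := by
    rcases le_total (t * lam) 1 with hle | hge
    · have hc : c = 1 - t * lam := max_eq_left (by linarith)
      have hres : f - c • f = t • lam • f := by
        rw [hc, sub_smul, one_smul, sub_sub_cancel, mul_smul]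
      rw [hres]
      exact (hef.smul_of_posHomogeneous hpos (le_max_right _ _)).const_mul ht.le
    · have htlam : 0 < t * lam := zero_lt_one.trans_le hge
      have hc : c = 0 := max_eq_right (by linarith)
      have h₀ : IsSubgradientAt (fun v => t * J v) 0 (t • lam • f) := by
        simpa using (hef.smul_of_posHomogeneous hpos le_rfl).const_mul ht.le
      have hmin : ∀ v, t * J 0 ≤ t * J v := fun v => mul_le_mul_of_nonneg_left
        (hconv.apply_zero_le_of_even (fun w => by simpa using hhom (-1) w) v) ht.le
      have hres : f = (t * lam)⁻¹ • t • lam • f := by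
        rw [smul_smul, smul_smul, mul_assoc, inv_mul_cancel₀ htlam.ne', one_smul]
      rw [hc, zero_smul, sub_zero, hres]
      exact h₀.smul_of_forall_le hmin (inv_nonneg.2 htlam.le) (inv_le_one_of_one_le₀ hge)
  refine forall_le_and_eq_of_quadratic_growth fun w => ?_
  rw [hE, hE]
  exact hsub.half_norm_sub_sq_add_le w

/-- If `λ • f ∈ ∂J(f)` with `λ > 0` and `t > 0`, then `u* = max(1 - tλ, 0) • f` is the
unique minimizer of the variational functional `E(u) = ½‖u - f‖² + t J(u)`. -/
theorem variational_minimizer_of_eigenfunction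
    {H : Type*} [NormedAddCommGroup H] [InnerProductSpace ℝ H] [CompleteSpace H]
    (J : H → ℝ) (hconv : ConvexOn ℝ Set.univ J)
    (hhom : ∀ (c : ℝ) (w : H), J (c • w) = |c| * J w)
    (f : H) (lam : ℝ) (hlam : 0 < lam) (hef : IsSubgradientAt J f (lam • f))
    (t : ℝ) (ht : 0 < t)
    (E : H → ℝ) (hE : ∀ w : H, E w = (1 / 2) * ‖w - f‖ ^ 2 + t * J w) :
    (∀ w : H, E (max (1 - t * lam) 0 • f) ≤ E w) ∧
      (∀ w : H, E w = E (max (1 - t * lam) 0 • f) → w = max (1 - t * lam) 0 • f) :=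
  variational_minimizer_of_eigenfunction_general J hconv hhom f lam hef t ht E hE
end

section
/- Let f ∈ H and λ > 0 with λ • f ∈ ∂J(f). Define u : [0,∞) → H by u(s) = 0 for 0 ≤ s < λ and u(s) = f for s ≥ λ, and p : [0,∞) → H by p(s) = s • f for 0 ≤ s ≤ λ and p(s) = λ • f for s > λ. Then p(0) = 0; p(s) ∈ ∂J(u(s)) for all s ≥ 0; and for every s ≠ λ, p is differentiable at s with p'(s) = f - u(s). Hence (u, p) solves the inverse scale space flow ∂ₛp(s) = f - u(s), p(s) ∈ ∂J(u(s)), and u jumps instantaneously from 0 to f at time s = λ. -/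
/-!
For an absolutely one-homogeneous `J`, the relation `p ∈ ∂J(u)` splits into `J u = ⟪p, u⟫`
and `⟪p, v⟫ ≤ J v` for all `v`. The second condition is preserved under scaling `p` by a
factor of modulus at most one, so every `s • f` with `0 ≤ s ≤ λ` lies in `∂J(0)`, while
`λ • f ∈ ∂J(f)` by assumption.
-/

open RealInnerProductSpace

section AbsHomogeneous

variable {H : Type*} [NormedAddCommGroup H] [InnerProductSpace ℝ H] {J : H → ℝ}

theorem map_zero_of_absHomogeneous (hJ : ∀ (c : ℝ) (w : H), J (c • w) = |c| * J w) :
    J 0 = 0 := by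
  simpa using hJ 0 0

theorem isSubgradientAt_zero_iff (hJ0 : J 0 = 0) {p : H} :
    IsSubgradientAt J 0 p ↔ ∀ v, ⟪p, v⟫ ≤ J v := by
  simp only [IsSubgradientAt, hJ0, sub_zero, zero_add, ge_iff_le]

theorem IsSubgradientAt.apply_eq_inner_s5 (hJ : ∀ (c : ℝ) (w : H), J (c • w) = |c| * J w)
    {u p : H} (h : IsSubgradientAt J u p) : J u = ⟪p, u⟫ := by
  have h_zero := h 0
  have h_two := h ((2 : ℝ) • u)
  rw [map_zero_of_absHomogeneous hJ, zero_sub, inner_neg_right] at h_zero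
  rw [hJ, two_smul, add_sub_cancel_right, abs_two] at h_two
  linarith

theorem IsSubgradientAt.inner_le_s5 (hJ : ∀ (c : ℝ) (w : H), J (c • w) = |c| * J w)
    {u p : H} (h : IsSubgradientAt J u p) (v : H) : ⟪p, v⟫ ≤ J v := by
  have := h v
  rw [h.apply_eq_inner_s5 hJ, inner_sub_right] at this
  linarith

theorem IsSubgradientAt.apply_nonneg_s5 (hJ : ∀ (c : ℝ) (w : H), J (c • w) = |c| * J w)
    {u p : H} (h : IsSubgradientAt J u p) (v : H) : 0 ≤ J v := by
  have h_neg := h.inner_le_s5 hJ (-v)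
  rw [← neg_one_smul ℝ v, hJ, inner_smul_right] at h_neg
  have := h.inner_le_s5 hJ v
  norm_num at h_neg
  linarith

theorem IsSubgradientAt.isSubgradientAt_zero_smul
    (hJ : ∀ (c : ℝ) (w : H), J (c • w) = |c| * J w) {u p : H} (h : IsSubgradientAt J u p)
    {t : ℝ} (ht : |t| ≤ 1) : IsSubgradientAt J 0 (t • p) := by
  rw [isSubgradientAt_zero_iff (map_zero_of_absHomogeneous hJ)]
  intro v
  calc ⟪t • p, v⟫ = ⟪p, t • v⟫ := by rw [real_inner_smul_left, real_inner_smul_right]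
    _ ≤ J (t • v) := h.inner_le_s5 hJ _
    _ = |t| * J v := hJ t v
    _ ≤ J v := mul_le_of_le_one_left (h.apply_nonneg_s5 hJ v) ht

end AbsHomogeneous

theorem hasDerivAt_ite_le_smul {E : Type*} [NormedAddCommGroup E] [NormedSpace ℝ E]
    (a : ℝ) (f : E) {s : ℝ} (hs : s ≠ a) :
    HasDerivAt (fun t : ℝ => if t ≤ a then t • f else a • f) (if s < a then f else 0) s := by
  rcases hs.lt_or_gt with hs | hs
  · have h_eq : (fun t : ℝ => if t ≤ a then t • f else a • f) =ᶠ[nhds s] fun t => t • f := by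
      filter_upwards [Iio_mem_nhds hs] with t ht
      rw [if_pos (le_of_lt ht)]
    rw [if_pos hs]
    simpa using ((hasDerivAt_id s).smul_const f).congr_of_eventuallyEq h_eq
  · have h_eq : (fun t : ℝ => if t ≤ a then t • f else a • f) =ᶠ[nhds s] fun _ => a • f := by
      filter_upwards [Ioi_mem_nhds hs] with t ht
      rw [if_neg (not_le.mpr ht)]
    rw [if_neg (not_lt.mpr hs.le)]
    exact (hasDerivAt_const s _).congr_of_eventuallyEq h_eq

theorem inverseScaleSpace_of_eigenfunction_general
    {H : Type*} [NormedAddCommGroup H] [InnerProductSpace ℝ H]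
    (J : H → ℝ)
    (hhom : ∀ (c : ℝ) (w : H), J (c • w) = |c| * J w)
    (f : H) (lam : ℝ) (hlam : 0 < lam) (hef : IsSubgradientAt J f (lam • f))
    (u p : ℝ → H)
    (hu : ∀ s : ℝ, u s = if s < lam then 0 else f)
    (hp : ∀ s : ℝ, p s = if s ≤ lam then s • f else lam • f) :
    p 0 = 0 ∧
      (∀ s : ℝ, 0 ≤ s → IsSubgradientAt J (u s) (p s)) ∧
      (∀ s : ℝ, 0 ≤ s → s ≠ lam → HasDerivAt p (f - u s) s) := by
  refine ⟨by simp [hp, hlam.le], fun s hs => ?_, fun s _ hne => ?_⟩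
  · rw [hu, hp]
    by_cases hs_lt : s < lam
    · have h_ratio : |s / lam| ≤ 1 := by
        rw [abs_of_nonneg (div_nonneg hs hlam.le), div_le_one hlam]
        exact hs_lt.le
      rw [if_pos hs_lt, if_pos hs_lt.le]
      convert hef.isSubgradientAt_zero_smul hhom h_ratio using 1
      rw [smul_smul, div_mul_cancel₀ s hlam.ne']
    · rw [if_neg hs_lt]
      split_ifs with hs_le
      · rwa [le_antisymm hs_le (not_lt.mp hs_lt)]
      · exact hef
  · rw [funext hp, hu]
    convert hasDerivAt_ite_le_smul lam f hne using 1
    split_ifs <;> simp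

/-- If `λ • f ∈ ∂J(f)` with `λ > 0`, then the pair `u(s) = 0` for `s < λ`, `u(s) = f`
for `s ≥ λ`, and `p(s) = s • f` for `s ≤ λ`, `p(s) = λ • f` for `s > λ`, solves the
inverse scale space flow `∂ₛ p(s) = f - u(s)`, `p(s) ∈ ∂J(u(s))`, `p(0) = 0`;
`u` jumps instantaneously from `0` to `f` at `s = λ`. -/
theorem inverseScaleSpace_of_eigenfunction
    {H : Type*} [NormedAddCommGroup H] [InnerProductSpace ℝ H] [CompleteSpace H]
    (J : H → ℝ) (hconv : ConvexOn ℝ Set.univ J)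
    (hhom : ∀ (c : ℝ) (w : H), J (c • w) = |c| * J w)
    (f : H) (lam : ℝ) (hlam : 0 < lam) (hef : IsSubgradientAt J f (lam • f))
    (u p : ℝ → H)
    (hu : ∀ s : ℝ, u s = if s < lam then 0 else f)
    (hp : ∀ s : ℝ, p s = if s ≤ lam then s • f else lam • f) :
    p 0 = 0 ∧
      (∀ s : ℝ, 0 ≤ s → IsSubgradientAt J (u s) (p s)) ∧
      (∀ s : ℝ, 0 ≤ s → s ≠ lam → HasDerivAt p (f - u s) s) :=
  inverseScaleSpace_of_eigenfunction_general J hhom f lam hlam hef u p hu hp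
end

section
/- Let u, p : (a,b) → H be such that p(s) ∈ ∂J(u(s)) for every s ∈ (a,b). If p is differentiable at a point t ∈ (a,b), then ⟨p'(t), u(t)⟩ = 0. (In particular, along the gradient flow the spectral component φ(t) = t ∂ₜₜ u(t) = -t p'(t) is orthogonal to u(t).) -/
namespace IsSubgradientAt

variable {H : Type*} [NormedAddCommGroup H] [InnerProductSpace ℝ H] {J : H → ℝ} {u p : H}

theorem inner_eq (hJ : ∀ (c : ℝ) (w : H), 0 ≤ c → J (c • w) = c * J w)
    (h : IsSubgradientAt J u p) : inner ℝ p u = J u := by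
  have at_zero := h ((0 : ℝ) • u)
  have at_two := h ((2 : ℝ) • u)
  rw [hJ 0 u le_rfl, zero_smul, zero_sub, inner_neg_right] at at_zero
  rw [hJ 2 u zero_le_two, two_smul, add_sub_cancel_right] at at_two
  linarith

theorem inner_le_s8 (hJ : ∀ (c : ℝ) (w : H), 0 ≤ c → J (c • w) = c * J w)
    (h : IsSubgradientAt J u p) (v : H) : inner ℝ p v ≤ J v := by
  have hv := h v
  rw [inner_sub_right, h.inner_eq hJ] at hv
  linarith

end IsSubgradientAt

theorem deriv_subgradient_orthogonal_general
    {H : Type*} [NormedAddCommGroup H] [InnerProductSpace ℝ H]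
    (J : H → ℝ)
    (hhom : ∀ (c : ℝ) (w : H), J (c • w) = |c| * J w)
    (a b : ℝ) (u p : ℝ → H)
    (hsub : ∀ s ∈ Set.Ioo a b, IsSubgradientAt J (u s) (p s))
    (t : ℝ) (ht : t ∈ Set.Ioo a b)
    (p' : H) (hp' : HasDerivAt p p' t) :
    (inner ℝ p' (u t) : ℝ) = 0 := by
  have hJ : ∀ (c : ℝ) (w : H), 0 ≤ c → J (c • w) = c * J w := fun c w hc => by
    rw [hhom, abs_of_nonneg hc]
  have hmax : IsLocalMax (fun s => inner ℝ (p s) (u t)) t := by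
    filter_upwards [Ioo_mem_nhds ht.1 ht.2] with s hs
    rw [(hsub t ht).inner_eq hJ]
    exact (hsub s hs).inner_le_s8 hJ (u t)
  have hderiv : HasDerivAt (fun s => inner ℝ (p s) (u t)) (inner ℝ p' (u t)) t := by
    simpa using hp'.inner ℝ (hasDerivAt_const t (u t))
  exact hmax.hasDerivAt_eq_zero hderiv

/-- Orthogonality: if `p(s) ∈ ∂J(u(s))` on `(a,b)` for a convex absolutely
one-homogeneous `J` and `p` is differentiable at `t ∈ (a,b)` with derivative `p'`,
then `⟨p'(t), u(t)⟩ = 0`. In particular, along the gradient flow the spectral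
component `φ(t) = t ∂ₜₜ u(t) = -t p'(t)` is orthogonal to `u(t)`. -/
theorem deriv_subgradient_orthogonal
    {H : Type*} [NormedAddCommGroup H] [InnerProductSpace ℝ H] [CompleteSpace H]
    (J : H → ℝ) (hconv : ConvexOn ℝ Set.univ J)
    (hhom : ∀ (c : ℝ) (w : H), J (c • w) = |c| * J w)
    (a b : ℝ) (u p : ℝ → H)
    (hsub : ∀ s ∈ Set.Ioo a b, IsSubgradientAt J (u s) (p s))
    (t : ℝ) (ht : t ∈ Set.Ioo a b)
    (p' : H) (hp' : HasDerivAt p p' t) :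
    (inner ℝ p' (u t) : ℝ) = 0 :=
  deriv_subgradient_orthogonal_general J hhom a b u p hsub t ht p' hp'
end

section
/- For every cutoff t_c > 0 with t_c ≠ |ζᵢ| for all i, the ideal low-pass filtered signal u(t_c) - t_c • u'(t_c) equals Vᵀ h(t_c), where hᵢ(t_c) = ζᵢ if |ζᵢ| > t_c and hᵢ(t_c) = 0 otherwise. That is, applying the ideal low pass filter with cutoff wavelength t_c in the nonlinear spectral representation of J(u) = ‖Vu‖₁ is exactly hard thresholding of the coefficients ζ = Vf at level t_c. -/
open Matrix

/-! Each coefficient `sᵢ(t) = sign ζᵢ · max (|ζᵢ| - t) 0` is piecewise affine in `t`, so away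
from its kink at `t = |ζᵢ|` the quantity `sᵢ(t) - t sᵢ'(t)` is the intercept of the current
affine piece: `sign ζᵢ · |ζᵢ| = ζᵢ` while `t < |ζᵢ|`, and `0` afterwards. The map
`u ↦ u - t u'` commutes with the constant linear map `Vᵀ`. -/

theorem HasDerivAt.matrix_mulVec {𝕜 : Type*} [NontriviallyNormedField 𝕜] {m n : Type*} [Fintype n]
    (A : Matrix m n 𝕜) {s : 𝕜 → n → 𝕜} {s' : n → 𝕜} {t : 𝕜} (h : HasDerivAt s s' t) :
    HasDerivAt (fun τ => A *ᵥ s τ) (A *ᵥ s') t :=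
  hasDerivAt_pi.2 fun i => HasDerivAt.fun_sum fun j _ => (hasDerivAt_pi.1 h j).const_mul (A i j)

theorem Real.sign_mul_abs (r : ℝ) : Real.sign r * |r| = r := by
  rcases lt_trichotomy r 0 with hr | rfl | hr
  · rw [Real.sign_of_neg hr, abs_of_neg hr]; ring
  · simp
  · rw [Real.sign_of_pos hr, abs_of_pos hr]; ring

noncomputable def softThreshold (a t : ℝ) : ℝ := Real.sign a * max (|a| - t) 0

theorem softThreshold_eventuallyEq_of_lt {a t : ℝ} (ht : t < |a|) :
    softThreshold a =ᶠ[nhds t] fun τ => Real.sign a * (|a| - τ) := by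
  filter_upwards [eventually_lt_nhds ht] with τ hτ
  rw [softThreshold, max_eq_left (by linarith)]

theorem softThreshold_eventuallyEq_of_gt {a t : ℝ} (ht : |a| < t) :
    softThreshold a =ᶠ[nhds t] fun _ => 0 := by
  filter_upwards [eventually_gt_nhds ht] with τ hτ
  rw [softThreshold, max_eq_right (by linarith), mul_zero]

theorem hasDerivAt_softThreshold {a t : ℝ} (ht : t ≠ |a|) :
    HasDerivAt (softThreshold a) (if t < |a| then -Real.sign a else 0) t := by
  rcases ht.lt_or_gt with ht | ht
  · rw [if_pos ht]
    have h := ((hasDerivAt_id t).const_sub |a|).const_mul (Real.sign a)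
    simpa using h.congr_of_eventuallyEq (softThreshold_eventuallyEq_of_lt ht)
  · rw [if_neg ht.not_gt]
    exact (hasDerivAt_const t 0).congr_of_eventuallyEq (softThreshold_eventuallyEq_of_gt ht)

theorem softThreshold_sub_mul_deriv {a t : ℝ} (ht : t ≠ |a|) :
    softThreshold a t - t * deriv (softThreshold a) t = if t < |a| then a else 0 := by
  rw [(hasDerivAt_softThreshold ht).deriv, softThreshold]
  rcases ht.lt_or_gt with ht | ht
  · rw [if_pos ht, if_pos ht, max_eq_left (by linarith)]
    linear_combination Real.sign_mul_abs a
  · rw [if_neg ht.not_gt, if_neg ht.not_gt, max_eq_right (by linarith)]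
    ring

theorem idealLowPass_eq_hardThresholding_general
    {n : ℕ} (V : Matrix (Fin n) (Fin n) ℝ)
    (ζ : Fin n → ℝ)
    (u : ℝ → Fin n → ℝ)
    (hu : ∀ t : ℝ, u t = Vᵀ.mulVec (fun i => Real.sign (ζ i) * max (|ζ i| - t) 0))
    (tc : ℝ) (hne : ∀ i, tc ≠ |ζ i|) :
    u tc - tc • deriv u tc =
      Vᵀ.mulVec (fun i => if tc < |ζ i| then ζ i else 0) := by
  have hu' : u = fun t => Vᵀ *ᵥ fun i => softThreshold (ζ i) t := funext hu
  have hs : HasDerivAt (fun t i => softThreshold (ζ i) t)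
      (fun i => deriv (softThreshold (ζ i)) tc) tc :=
    hasDerivAt_pi.2 fun i => (hasDerivAt_softThreshold (hne i)).differentiableAt.hasDerivAt
  subst hu'
  rw [(hs.matrix_mulVec Vᵀ).deriv, ← mulVec_smul, ← mulVec_sub]
  congr 1 with i
  exact softThreshold_sub_mul_deriv (hne i)

/-- For `J(u) = ‖Vu‖₁` with `V` orthogonal and `ζ = Vf`, applying the ideal low pass
filter with cutoff wavelength `t_c` to the nonlinear spectral representation, i.e.
`LPF_{t_c}(f) = ∫_{t_c}^∞ t u''(t) dt = u(t_c) - t_c u'(t_c)`, is exactly hard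
thresholding of the coefficients `ζ` at level `t_c`: it equals `Vᵀ h(t_c)` with
`hᵢ(t_c) = ζᵢ` if `|ζᵢ| > t_c` and `hᵢ(t_c) = 0` otherwise. -/
theorem idealLowPass_eq_hardThresholding
    {n : ℕ} (V : Matrix (Fin n) (Fin n) ℝ) (hV : Vᵀ * V = 1)
    (f ζ : Fin n → ℝ) (hζ : ζ = V.mulVec f)
    (u : ℝ → Fin n → ℝ)
    (hu : ∀ t : ℝ, u t = Vᵀ.mulVec (fun i => Real.sign (ζ i) * max (|ζ i| - t) 0))
    (tc : ℝ) (htc : 0 < tc) (hne : ∀ i, tc ≠ |ζ i|) :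
    u tc - tc • deriv u tc =
      Vᵀ.mulVec (fun i => if tc < |ζ i| then ζ i else 0) :=
  idealLowPass_eq_hardThresholding_general V ζ u hu tc hne
end
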